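/- Let Ω₁, Ω₂ ⊆ ℝⁿ be locally closed unbounded sets and let u ∈ (Ω₁ ∩ Ω₂)^∞ ∩ 𝕊. If the directional qualification condition N_{Ω₁}(∞;u) ∩ (−N_{Ω₂}(∞;u)) = {0} holds, then the directional normal cone at infinity of the intersection satisfies the sum rule inclusion N_{Ω₁∩Ω₂}(∞;u) ⊆ N_{Ω₁}(∞;u) + N_{Ω₂}(∞;u). -/

import Mathlib

open Filter Topology Set
open scoped RealInnerProductSpace Pointwise

noncomputable section
set_option maxHeartbeats 1600000

/-- `ℝⁿ` with the Euclidean structure. -/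
abbrev Eu (n : ℕ) := EuclideanSpace ℝ (Fin n)

/-- The Fréchet (regular) normal cone to `Ω ⊆ ℝⁿ` at `xc` (empty when `xc ∉ Ω`):
`v` belongs to it iff `limsup_{x → xc, x ∈ Ω} ⟪v, x - xc⟫ / ‖x - xc‖ ≤ 0`. -/
def frechetNC {n : ℕ} (Ω : Set (Eu n)) (xc : Eu n) : Set (Eu n) :=
  {v | xc ∈ Ω ∧ ∀ ε > 0, ∃ δ > 0, ∀ x ∈ Ω, ‖x - xc‖ < δ →
        ⟪v, x - xc⟫ ≤ ε * ‖x - xc‖}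

/-- `x_k →ᵘ ∞` : `‖x_k‖ → ∞` and `x_k / ‖x_k‖ → u`. -/
def TendstoDirInfty {n : ℕ} (x : ℕ → Eu n) (u : Eu n) : Prop :=
  Tendsto (fun k => ‖x k‖) atTop atTop ∧
  Tendsto (fun k => ‖x k‖⁻¹ • x k) atTop (𝓝 u)

/-- The asymptotic cone of `D`: all `u` such that `x_k / t_k → u` for some
`t_k → +∞` and `x_k ∈ D`. -/
def asymptoticConeEu {n : ℕ} (D : Set (Eu n)) : Set (Eu n) :=
  {u | ∃ (t : ℕ → ℝ) (x : ℕ → Eu n), Tendsto t atTop atTop ∧ (∀ k, x k ∈ D) ∧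
      Tendsto (fun k => (t k)⁻¹ • x k) atTop (𝓝 u)}

/-- The normal cone to `Ω` in direction `u` at infinity:
limits of Fréchet normals along sequences `x_k →^{Ω,u} ∞`. -/
def dirNCInfty {n : ℕ} (Ω : Set (Eu n)) (u : Eu n) : Set (Eu n) :=
  {ξ | ∃ (x w : ℕ → Eu n), (∀ k, x k ∈ Ω) ∧ TendstoDirInfty x u ∧
      (∀ k, w k ∈ frechetNC Ω (x k)) ∧ Tendsto w atTop (𝓝 ξ)}

lemma mem_frechetNC_of_quad {n : ℕ} {Ω : Set (Eu n)} {y v : Eu n} (hy : y ∈ Ω)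
    {C ρ : ℝ} (hC : 0 ≤ C) (hρ : 0 < ρ)
    (h : ∀ x ∈ Ω, ‖x - y‖ < ρ → ⟪v, x - y⟫ ≤ C * ‖x - y‖ ^ 2) :
    v ∈ frechetNC Ω y := by
  refine ⟨hy, fun ε hε => ⟨min ρ (ε / (C + 1)), by positivity, fun x hx hxd => ?_⟩⟩
  have h1 : ‖x - y‖ < ρ := lt_of_lt_of_le hxd (min_le_left _ _)
  have h2 : ‖x - y‖ ≤ ε / (C + 1) := le_of_lt (lt_of_lt_of_le hxd (min_le_right _ _))
  have h3 := h x hx h1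
  have hnn : (0:ℝ) ≤ ‖x - y‖ := norm_nonneg _
  calc ⟪v, x - y⟫ ≤ C * ‖x - y‖ ^ 2 := h3
    _ = (C * ‖x - y‖) * ‖x - y‖ := by ring
    _ ≤ ε * ‖x - y‖ := by
        apply mul_le_mul_of_nonneg_right _ hnn
        calc C * ‖x - y‖ ≤ (C + 1) * (ε / (C + 1)) := by
              apply mul_le_mul (by linarith) h2 hnn (by linarith)
          _ = ε := by field_simp

lemma norm_sub_sq_expand {n : ℕ} (x y b : Eu n) :
    ‖x - b‖^2 = ‖y - b‖^2 + 2*⟪y - b, x - y⟫ + ‖x - y‖^2 := by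
  have h : x - b = (y - b) + (x - y) := by abel
  rw [h, norm_add_sq_real]

lemma fuzzy_inter {n : ℕ} {Ω₁ Ω₂ : Set (Eu n)} {xb : Eu n}
    (h1 : xb ∈ Ω₁) (h2 : xb ∈ Ω₂)
    (hc1 : ∃ U ∈ 𝓝 xb, IsClosed (Ω₁ ∩ U)) (hc2 : ∃ U ∈ 𝓝 xb, IsClosed (Ω₂ ∩ U))
    {w : Eu n} (hw : w ∈ frechetNC (Ω₁ ∩ Ω₂) xb) {ε : ℝ} (hε : 0 < ε) :
    ∃ Y Z η ζ : Eu n, Y ∈ Ω₁ ∧ Z ∈ Ω₂ ∧ η ∈ frechetNC Ω₁ Y ∧ ζ ∈ frechetNC Ω₂ Z ∧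
      ‖Y - xb‖ ≤ ε ∧ ‖Z - xb‖ ≤ ε ∧ ‖w - η - ζ‖ ≤ ε := by
  obtain ⟨U₁, hU₁, hcl₁⟩ := hc1
  obtain ⟨U₂, hU₂, hcl₂⟩ := hc2
  obtain ⟨r₁, hr₁, hb₁⟩ := Metric.nhds_basis_closedBall.mem_iff.mp hU₁
  obtain ⟨r₂, hr₂, hb₂⟩ := Metric.nhds_basis_closedBall.mem_iff.mp hU₂
  set ε₀ := ε/4 with hε₀def
  have hε₀ : 0 < ε₀ := by positivity
  obtain ⟨δ₁, hδ₁, hfre⟩ := hw.2 ε₀ hε₀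
  set ρ := min (min r₁ r₂) (δ₁/2) with hρdef
  have hρ : 0 < ρ := by positivity
  have hρδ : ρ < δ₁ := lt_of_le_of_lt (min_le_right _ _) (by linarith)
  have hρr₁ : ρ ≤ r₁ := le_trans (min_le_left _ _) (min_le_left _ _)
  have hρr₂ : ρ ≤ r₂ := le_trans (min_le_left _ _) (min_le_right _ _)
  set c := max 1 (ε/ρ) with hcdef
  have hc1' : (1:ℝ) ≤ c := le_max_left _ _
  have hc0 : (0:ℝ) < c := by linarith
  have hcρ : ε₀ / c ≤ ρ/4 := by
    rw [div_le_iff₀ hc0]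
    calc ε₀ = (ρ/4) * (ε/ρ) := by field_simp [hε₀def]; ring
      _ ≤ (ρ/4) * c := by
          apply mul_le_mul_of_nonneg_left (le_max_right _ _) (by positivity)
  set K₁ : Set (Eu n) := Ω₁ ∩ Metric.closedBall xb ρ with hK₁def
  set K₂ : Set (Eu n) := Ω₂ ∩ Metric.closedBall xb ρ with hK₂def
  have hK₁cl : IsClosed K₁ := by
    have : K₁ = (Ω₁ ∩ U₁) ∩ Metric.closedBall xb ρ := by
      rw [hK₁def]
      ext p; constructor
      · rintro ⟨hp1, hp2⟩
        exact ⟨⟨hp1, hb₁ (Metric.closedBall_subset_closedBall hρr₁ hp2)⟩, hp2⟩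
      · rintro ⟨⟨hp1, _⟩, hp2⟩; exact ⟨hp1, hp2⟩
    rw [this]; exact hcl₁.inter Metric.isClosed_closedBall
  have hK₂cl : IsClosed K₂ := by
    have : K₂ = (Ω₂ ∩ U₂) ∩ Metric.closedBall xb ρ := by
      rw [hK₂def]
      ext p; constructor
      · rintro ⟨hp1, hp2⟩
        exact ⟨⟨hp1, hb₂ (Metric.closedBall_subset_closedBall hρr₂ hp2)⟩, hp2⟩
      · rintro ⟨⟨hp1, _⟩, hp2⟩; exact ⟨hp1, hp2⟩
    rw [this]; exact hcl₂.inter Metric.isClosed_closedBall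
  have hK₁cp : IsCompact K₁ :=
    (isCompact_closedBall xb ρ).of_isClosed_subset hK₁cl (inter_subset_right)
  have hK₂cp : IsCompact K₂ :=
    (isCompact_closedBall xb ρ).of_isClosed_subset hK₂cl (inter_subset_right)
  have hxbK₁ : xb ∈ K₁ := ⟨h1, Metric.mem_closedBall_self hρ.le⟩
  have hxbK₂ : xb ∈ K₂ := ⟨h2, Metric.mem_closedBall_self hρ.le⟩
  set K : Set (Eu n × Eu n) := K₁ ×ˢ K₂ with hKdef
  have hKcp : IsCompact K := hK₁cp.prod hK₂cp
  have hKne : K.Nonempty := ⟨(xb, xb), Set.mk_mem_prod hxbK₁ hxbK₂⟩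
  set g : ℕ → Eu n × Eu n → ℝ := fun r p =>
      -(⟪w, p.1 - xb⟫ + ⟪w, p.2 - xb⟫)/2 + ((r:ℝ)/2)*‖p.1 - p.2‖^2
        + (c/2)*(‖p.1 - xb‖^2 + ‖p.2 - xb‖^2) with hgdef
  have hgcont : ∀ r : ℕ, Continuous (g r) := by
    intro r
    have ha : Continuous (fun p : Eu n × Eu n => ⟪w, p.1 - xb⟫) :=
      continuous_const.inner (continuous_fst.sub continuous_const)
    have hb : Continuous (fun p : Eu n × Eu n => ⟪w, p.2 - xb⟫) :=
      continuous_const.inner (continuous_snd.sub continuous_const)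
    have hn1 : Continuous (fun p : Eu n × Eu n => ‖p.1 - p.2‖^2) :=
      ((continuous_fst.sub continuous_snd).norm).pow 2
    have hn2 : Continuous (fun p : Eu n × Eu n => ‖p.1 - xb‖^2) :=
      ((continuous_fst.sub continuous_const).norm).pow 2
    have hn3 : Continuous (fun p : Eu n × Eu n => ‖p.2 - xb‖^2) :=
      ((continuous_snd.sub continuous_const).norm).pow 2
    rw [hgdef]
    exact ((((ha.add hb).neg).div_const 2).add (continuous_const.mul hn1)).add
      (continuous_const.mul (hn2.add hn3))
  have hmin : ∀ r : ℕ, ∃ p ∈ K, IsMinOn (g r) K p := fun r =>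
    hKcp.exists_isMinOn hKne (hgcont r).continuousOn
  choose p hpK hpmin using hmin
  -- basic inequality: g r (p r) ≤ 0
  have hg0 : ∀ r : ℕ, g r (p r) ≤ 0 := by
    intro r
    have := hpmin r (Set.mk_mem_prod hxbK₁ hxbK₂)
    simpa [hgdef] using this
  have hyK : ∀ r, (p r).1 ∈ K₁ := fun r => (Set.mem_prod.mp (hpK r)).1
  have hzK : ∀ r, (p r).2 ∈ K₂ := fun r => (Set.mem_prod.mp (hpK r)).2
  have hyρ : ∀ r, ‖(p r).1 - xb‖ ≤ ρ := fun r => by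
    have := (hyK r).2; rwa [Metric.mem_closedBall, dist_eq_norm] at this
  have hzρ : ∀ r, ‖(p r).2 - xb‖ ≤ ρ := fun r => by
    have := (hzK r).2; rwa [Metric.mem_closedBall, dist_eq_norm] at this
  have hkey : ∀ r : ℕ, ((r:ℝ)/2)*‖(p r).1 - (p r).2‖^2
      + (c/2)*(‖(p r).1 - xb‖^2 + ‖(p r).2 - xb‖^2)
      ≤ (⟪w, (p r).1 - xb⟫ + ⟪w, (p r).2 - xb⟫)/2 := by
    intro r; have h := hg0 r; simp only [hgdef] at h; linarith
  have hinb : ∀ r : ℕ, (⟪w, (p r).1 - xb⟫ + ⟪w, (p r).2 - xb⟫)/2 ≤ ‖w‖ * ρ := by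
    intro r
    have a1 : ⟪w, (p r).1 - xb⟫ ≤ ‖w‖ * ρ := le_trans (real_inner_le_norm _ _)
      (mul_le_mul_of_nonneg_left (hyρ r) (norm_nonneg w))
    have a2 : ⟪w, (p r).2 - xb⟫ ≤ ‖w‖ * ρ := le_trans (real_inner_le_norm _ _)
      (mul_le_mul_of_nonneg_left (hzρ r) (norm_nonneg w))
    linarith
  -- ‖y_r - z_r‖² → 0
  have hdiff0 : Tendsto (fun r => ‖(p r).1 - (p r).2‖^2) atTop (𝓝 0) := by
    apply squeeze_zero' (g := fun r : ℕ => 2*(‖w‖*ρ)/r)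
      (Eventually.of_forall (fun r => by positivity))
    · filter_upwards [eventually_ge_atTop 1] with r hr
      have h1 := hkey r
      have h2 := hinb r
      have hc2 : (0:ℝ) ≤ (c/2)*(‖(p r).1 - xb‖^2 + ‖(p r).2 - xb‖^2) := by positivity
      have hr1 : (1:ℝ) ≤ (r:ℝ) := by exact_mod_cast hr
      rw [le_div_iff₀ (show (0:ℝ) < (r:ℝ) by linarith)]
      nlinarith
    · exact tendsto_const_div_atTop_nhds_zero_nat _
  obtain ⟨q, hqK, φ, hφ, hconv⟩ := hKcp.tendsto_subseq hpK
  have hy1 : Tendsto (fun r => (p (φ r)).1) atTop (𝓝 q.1) :=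
    ((continuous_fst.tendsto q).comp hconv)
  have hy2 : Tendsto (fun r => (p (φ r)).2) atTop (𝓝 q.2) :=
    ((continuous_snd.tendsto q).comp hconv)
  have hqeq : q.1 = q.2 := by
    have t1 : Tendsto (fun r => ‖(p (φ r)).1 - (p (φ r)).2‖^2) atTop (𝓝 (‖q.1 - q.2‖^2)) := by
      have := hy1.sub hy2
      exact (this.norm).pow 2
    have t2 : Tendsto (fun r => ‖(p (φ r)).1 - (p (φ r)).2‖^2) atTop (𝓝 0) :=
      hdiff0.comp hφ.tendsto_atTop
    have h0 : ‖q.1 - q.2‖^2 = 0 := tendsto_nhds_unique t1 t2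
    have h1 : ‖q.1 - q.2‖ = 0 := by
      have := sq_eq_zero_iff.mp h0
      exact this
    exact sub_eq_zero.mp (norm_eq_zero.mp h1)
  -- limit inequality: c‖q₁-xb‖² ≤ ⟪w, q₁-xb⟫
  have hFq : c*‖q.1 - xb‖^2 ≤ ⟪w, q.1 - xb⟫ := by
    have hF : ∀ r : ℕ, (c/2)*(‖(p r).1 - xb‖^2 + ‖(p r).2 - xb‖^2)
        ≤ (⟪w, (p r).1 - xb⟫ + ⟪w, (p r).2 - xb⟫)/2 := by
      intro r
      have h1 := hkey r
      have h2 : (0:ℝ) ≤ ((r:ℝ)/2)*‖(p r).1 - (p r).2‖^2 := by positivity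
      linarith
    have tL : Tendsto (fun r => (c/2)*(‖(p (φ r)).1 - xb‖^2 + ‖(p (φ r)).2 - xb‖^2))
        atTop (𝓝 ((c/2)*(‖q.1 - xb‖^2 + ‖q.2 - xb‖^2))) := by
      apply Tendsto.const_mul
      exact (((hy1.sub tendsto_const_nhds).norm.pow 2).add
        ((hy2.sub tendsto_const_nhds).norm.pow 2))
    have tR : Tendsto (fun r => (⟪w, (p (φ r)).1 - xb⟫ + ⟪w, (p (φ r)).2 - xb⟫)/2)
        atTop (𝓝 ((⟪w, q.1 - xb⟫ + ⟪w, q.2 - xb⟫)/2)) := by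
      apply Tendsto.div_const
      exact ((Tendsto.inner tendsto_const_nhds (hy1.sub tendsto_const_nhds)).add
        (Tendsto.inner tendsto_const_nhds (hy2.sub tendsto_const_nhds)))
    have hlim := le_of_tendsto_of_tendsto' tL tR (fun r => hF (φ r))
    rw [← hqeq] at hlim
    linarith
  have hq₁ : q.1 ∈ Ω₁ := ((Set.mem_prod.mp hqK).1).1
  have hq₂ : q.1 ∈ Ω₂ := by
    have := ((Set.mem_prod.mp hqK).2).1
    rwa [hqeq]
  have hqρ : ‖q.1 - xb‖ ≤ ρ := by
    have := ((Set.mem_prod.mp hqK).1).2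
    rwa [Metric.mem_closedBall, dist_eq_norm] at this
  have hqsmall : ‖q.1 - xb‖ ≤ ε₀ / c := by
    have hiq : ⟪w, q.1 - xb⟫ ≤ ε₀ * ‖q.1 - xb‖ :=
      hfre q.1 ⟨hq₁, hq₂⟩ (lt_of_le_of_lt hqρ hρδ)
    rcases eq_or_lt_of_le (norm_nonneg (q.1 - xb)) with h0 | h0
    · rw [← h0]; positivity
    · rw [le_div_iff₀ hc0]
      have : c * ‖q.1 - xb‖ * ‖q.1 - xb‖ ≤ ε₀ * ‖q.1 - xb‖ := by nlinarith
      calc ‖q.1 - xb‖ * c = c * ‖q.1 - xb‖ := by ring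
        _ ≤ ε₀ := le_of_mul_le_mul_right (by linarith) h0
  -- choose R far enough
  have hev1 : ∀ᶠ R in atTop, ‖(p (φ R)).1 - q.1‖ ≤ ε₀ / c := by
    have := Metric.tendsto_atTop.mp hy1 (ε₀ / c) (by positivity)
    obtain ⟨N, hN⟩ := this
    exact eventually_atTop.mpr ⟨N, fun R hR => by
      have := hN R hR; rw [dist_eq_norm] at this; linarith⟩
  have hev2 : ∀ᶠ R in atTop, ‖(p (φ R)).2 - q.1‖ ≤ ε₀ / c := by
    have hy2' : Tendsto (fun r => (p (φ r)).2) atTop (𝓝 q.1) := by rw [hqeq]; exact hy2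
    obtain ⟨N, hN⟩ := Metric.tendsto_atTop.mp hy2' (ε₀ / c) (by positivity)
    exact eventually_atTop.mpr ⟨N, fun R hR => by
      have := hN R hR; rw [dist_eq_norm] at this; linarith⟩
  obtain ⟨R, hR1, hR2⟩ := (hev1.and hev2).exists
  set r := φ R with hrdef
  obtain ⟨Y, Z, hYZ⟩ : ∃ Y Z, p r = (Y, Z) := ⟨(p r).1, (p r).2, rfl⟩
  have hYK : Y ∈ K₁ := by have := hyK r; rwa [hYZ] at this
  have hZK : Z ∈ K₂ := by have := hzK r; rwa [hYZ] at this
  have hR1' : ‖Y - q.1‖ ≤ ε₀ / c := by rw [hrdef] at hYZ; rw [hYZ] at hR1; exact hR1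
  have hR2' : ‖Z - q.1‖ ≤ ε₀ / c := by rw [hrdef] at hYZ; rw [hYZ] at hR2; exact hR2
  have hpmin' : ∀ pt ∈ K, g r (Y, Z) ≤ g r pt := by
    intro pt hpt
    have := hpmin r hpt
    rwa [hYZ] at this
  have hYxb : ‖Y - xb‖ ≤ 2 * (ε₀ / c) := by
    calc ‖Y - xb‖ ≤ ‖Y - q.1‖ + ‖q.1 - xb‖ := norm_sub_le_norm_sub_add_norm_sub _ _ _
      _ ≤ ε₀/c + ε₀/c := add_le_add hR1' hqsmall
      _ = 2 * (ε₀/c) := by ring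
  have hZxb : ‖Z - xb‖ ≤ 2 * (ε₀ / c) := by
    calc ‖Z - xb‖ ≤ ‖Z - q.1‖ + ‖q.1 - xb‖ := norm_sub_le_norm_sub_add_norm_sub _ _ _
      _ ≤ ε₀/c + ε₀/c := add_le_add hR2' hqsmall
      _ = 2 * (ε₀/c) := by ring
  have hYρ2 : ‖Y - xb‖ ≤ ρ/2 := le_trans hYxb (by linarith)
  have hZρ2 : ‖Z - xb‖ ≤ ρ/2 := le_trans hZxb (by linarith)
  refine ⟨Y, Z, (2⁻¹:ℝ) • w - ((r:ℝ)) • (Y - Z) - c • (Y - xb),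
    (2⁻¹:ℝ) • w + ((r:ℝ)) • (Y - Z) - c • (Z - xb), hYK.1, hZK.1, ?_, ?_, ?_, ?_, ?_⟩
  · -- η ∈ frechetNC Ω₁ Y
    apply mem_frechetNC_of_quad hYK.1 (C := ((r:ℝ)+c)/2) (ρ := ρ/2)
      (by positivity) (by positivity)
    intro x hx hxd
    have hxK : x ∈ K₁ := by
      refine ⟨hx, ?_⟩
      rw [Metric.mem_closedBall, dist_eq_norm]
      calc ‖x - xb‖ ≤ ‖x - Y‖ + ‖Y - xb‖ := norm_sub_le_norm_sub_add_norm_sub _ _ _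
        _ ≤ ρ/2 + ρ/2 := add_le_add hxd.le hYρ2
        _ = ρ := by ring
    have hmin : g r (Y, Z) ≤ g r (x, Z) := hpmin' (x, Z) (Set.mk_mem_prod hxK hZK)
    simp only [hgdef] at hmin
    have I1 : ‖x - Z‖^2 = ‖Y - Z‖^2 + 2*⟪Y - Z, x - Y⟫ + ‖x - Y‖^2 :=
      norm_sub_sq_expand x Y Z
    have I2 : ‖x - xb‖^2 = ‖Y - xb‖^2 + 2*⟪Y - xb, x - Y⟫ + ‖x - Y‖^2 :=
      norm_sub_sq_expand x Y xb
    have I3 : ⟪w, x - xb⟫ = ⟪w, Y - xb⟫ + ⟪w, x - Y⟫ := by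
      have hsplit : x - xb = (Y - xb) + (x - Y) := by abel
      rw [hsplit, inner_add_right]
    have I4 : ⟪(2⁻¹:ℝ) • w - ((r:ℝ)) • (Y - Z) - c • (Y - xb), x - Y⟫
        = 2⁻¹*⟪w, x - Y⟫ - (r:ℝ)*⟪Y - Z, x - Y⟫ - c*⟪Y - xb, x - Y⟫ := by
      rw [inner_sub_left, inner_sub_left, real_inner_smul_left,
        real_inner_smul_left, real_inner_smul_left]
    have J1 : ((r:ℝ)/2) * ‖x - Z‖^2 = ((r:ℝ)/2)*‖Y - Z‖^2 + (r:ℝ)*⟪Y - Z, x - Y⟫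
        + ((r:ℝ)/2)*‖x - Y‖^2 := by rw [I1]; ring
    have J2 : (c/2) * ‖x - xb‖^2 = (c/2)*‖Y - xb‖^2 + c*⟪Y - xb, x - Y⟫
        + (c/2)*‖x - Y‖^2 := by rw [I2]; ring
    rw [I4]
    linarith [hmin, J1, J2, I3]
  · -- ζ ∈ frechetNC Ω₂ Z
    apply mem_frechetNC_of_quad hZK.1 (C := ((r:ℝ)+c)/2) (ρ := ρ/2)
      (by positivity) (by positivity)
    intro x hx hxd
    have hxK : x ∈ K₂ := by
      refine ⟨hx, ?_⟩
      rw [Metric.mem_closedBall, dist_eq_norm]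
      calc ‖x - xb‖ ≤ ‖x - Z‖ + ‖Z - xb‖ := norm_sub_le_norm_sub_add_norm_sub _ _ _
        _ ≤ ρ/2 + ρ/2 := add_le_add hxd.le hZρ2
        _ = ρ := by ring
    have hmin : g r (Y, Z) ≤ g r (Y, x) := hpmin' (Y, x) (Set.mk_mem_prod hYK hxK)
    simp only [hgdef] at hmin
    have I1 : ‖Y - x‖^2 = ‖Y - Z‖^2 + 2*⟪Z - Y, x - Z⟫ + ‖x - Z‖^2 := by
      rw [norm_sub_rev Y x, norm_sub_sq_expand x Z Y, norm_sub_rev Z Y]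
    have I2 : ‖x - xb‖^2 = ‖Z - xb‖^2 + 2*⟪Z - xb, x - Z⟫ + ‖x - Z‖^2 :=
      norm_sub_sq_expand x Z xb
    have I3 : ⟪w, x - xb⟫ = ⟪w, Z - xb⟫ + ⟪w, x - Z⟫ := by
      have hsplit : x - xb = (Z - xb) + (x - Z) := by abel
      rw [hsplit, inner_add_right]
    have I4 : ⟪(2⁻¹:ℝ) • w + ((r:ℝ)) • (Y - Z) - c • (Z - xb), x - Z⟫
        = 2⁻¹*⟪w, x - Z⟫ + (r:ℝ)*⟪Y - Z, x - Z⟫ - c*⟪Z - xb, x - Z⟫ := by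
      rw [inner_sub_left, inner_add_left, real_inner_smul_left,
        real_inner_smul_left, real_inner_smul_left]
    have I5 : ⟪Z - Y, x - Z⟫ = -⟪Y - Z, x - Z⟫ := by
      rw [show Z - Y = -(Y - Z) by abel, inner_neg_left]
    have J1 : ((r:ℝ)/2) * ‖Y - x‖^2 = ((r:ℝ)/2)*‖Y - Z‖^2 - (r:ℝ)*⟪Y - Z, x - Z⟫
        + ((r:ℝ)/2)*‖x - Z‖^2 := by rw [I1, I5]; ring
    have J2 : (c/2) * ‖x - xb‖^2 = (c/2)*‖Z - xb‖^2 + c*⟪Z - xb, x - Z⟫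
        + (c/2)*‖x - Z‖^2 := by rw [I2]; ring
    rw [I4]
    linarith [hmin, J1, J2, I3]
  · calc ‖Y - xb‖ ≤ 2*(ε₀/c) := hYxb
      _ ≤ 2*ε₀ := by
          apply mul_le_mul_of_nonneg_left _ (by norm_num)
          exact div_le_self hε₀.le hc1'
      _ ≤ ε := by rw [hε₀def]; linarith
  · calc ‖Z - xb‖ ≤ 2*(ε₀/c) := hZxb
      _ ≤ 2*ε₀ := by
          apply mul_le_mul_of_nonneg_left _ (by norm_num)
          exact div_le_self hε₀.le hc1'
      _ ≤ ε := by rw [hε₀def]; linarith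
  · have hwsum : w - ((2⁻¹:ℝ) • w - ((r:ℝ)) • (Y - Z) - c • (Y - xb))
        - ((2⁻¹:ℝ) • w + ((r:ℝ)) • (Y - Z) - c • (Z - xb))
        = c • (Y - xb) + c • (Z - xb) := by module
    rw [hwsum]
    calc ‖c • (Y - xb) + c • (Z - xb)‖ ≤ ‖c • (Y - xb)‖ + ‖c • (Z - xb)‖ := norm_add_le _ _
      _ = c*‖Y - xb‖ + c*‖Z - xb‖ := by
          rw [norm_smul, norm_smul, Real.norm_eq_abs, abs_of_pos hc0]
      _ ≤ c*(2*(ε₀/c)) + c*(2*(ε₀/c)) := by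
          apply add_le_add <;> exact mul_le_mul_of_nonneg_left (by assumption) hc0.le
      _ = 4*ε₀ := by field_simp; ring
      _ = ε := by rw [hε₀def]; ring

lemma frechetNC_smul {n : ℕ} {Ω : Set (Eu n)} {xc v : Eu n} {t : ℝ} (ht : 0 < t)
    (hv : v ∈ frechetNC Ω xc) : t • v ∈ frechetNC Ω xc := by
  obtain ⟨hx, h⟩ := hv
  refine ⟨hx, fun ε hε => ?_⟩
  obtain ⟨δ, hδ, hd⟩ := h (ε / t) (by positivity)
  refine ⟨δ, hδ, fun x hxΩ hxd => ?_⟩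
  have h2 := hd x hxΩ hxd
  rw [real_inner_smul_left]
  calc t * ⟪v, x - xc⟫ ≤ t * (ε / t * ‖x - xc‖) :=
        mul_le_mul_of_nonneg_left h2 ht.le
    _ = ε * ‖x - xc‖ := by
        field_simp

lemma dirNCInfty_smul {n : ℕ} {Ω : Set (Eu n)} {u ξ : Eu n} {t : ℝ} (ht : 0 < t)
    (hξ : ξ ∈ dirNCInfty Ω u) : t • ξ ∈ dirNCInfty Ω u := by
  obtain ⟨x, w, hxΩ, hxd, hwNC, hwl⟩ := hξ
  exact ⟨x, fun k => t • w k, hxΩ, hxd, fun k => frechetNC_smul ht (hwNC k),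
    hwl.const_smul t⟩

lemma tendstoDirInfty_of_close {n : ℕ} {x y : ℕ → Eu n} {u : Eu n}
    (hx : TendstoDirInfty x u) (h : ∀ k, ‖y k - x k‖ ≤ 1) : TendstoDirInfty y u := by
  have hnorm : ∀ k, |‖y k‖ - ‖x k‖| ≤ 1 := fun k =>
    le_trans (abs_norm_sub_norm_le _ _) (h k)
  have hyatTop : Tendsto (fun k => ‖y k‖) atTop atTop := by
    apply tendsto_atTop_mono (fun k => ?_) (tendsto_atTop_add_const_right _ (-1) hx.1)
    have := (abs_le.mp (hnorm k)).1
    linarith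
  refine ⟨hyatTop, ?_⟩
  have hinv : Tendsto (fun k => 2 * ‖y k‖⁻¹) atTop (𝓝 0) := by
    have := (tendsto_inv_atTop_zero).comp hyatTop
    simpa using this.const_mul 2
  have hev : ∀ᶠ k in atTop, ‖(‖y k‖⁻¹ • y k - ‖x k‖⁻¹ • x k)‖ ≤ 2 * ‖y k‖⁻¹ := by
    filter_upwards [hx.1.eventually_ge_atTop 1, hyatTop.eventually_ge_atTop 1]
      with k hx1 hy1
    have hx0 : (0:ℝ) < ‖x k‖ := by linarith
    have hy0 : (0:ℝ) < ‖y k‖ := by linarith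
    have hid : ‖y k‖⁻¹ • y k - ‖x k‖⁻¹ • x k
        = ‖y k‖⁻¹ • (y k - x k) + (‖y k‖⁻¹ - ‖x k‖⁻¹) • x k := by
      module
    rw [hid]
    have hb1 : ‖(‖y k‖⁻¹ • (y k - x k))‖ ≤ ‖y k‖⁻¹ := by
      rw [norm_smul, Real.norm_eq_abs, abs_of_pos (by positivity)]
      calc ‖y k‖⁻¹ * ‖y k - x k‖ ≤ ‖y k‖⁻¹ * 1 :=
            mul_le_mul_of_nonneg_left (h k) (by positivity)
        _ = ‖y k‖⁻¹ := mul_one _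
    have hb2 : ‖((‖y k‖⁻¹ - ‖x k‖⁻¹) • x k)‖ ≤ ‖y k‖⁻¹ := by
      rw [norm_smul, Real.norm_eq_abs]
      have heq : ‖y k‖⁻¹ - ‖x k‖⁻¹ = (‖x k‖ - ‖y k‖) / (‖x k‖ * ‖y k‖) := by
        field_simp
      rw [heq, abs_div, abs_of_pos (by positivity : (0:ℝ) < ‖x k‖ * ‖y k‖)]
      have habs : |‖x k‖ - ‖y k‖| ≤ 1 := by
        rw [abs_sub_comm]; exact hnorm k
      calc |‖x k‖ - ‖y k‖| / (‖x k‖ * ‖y k‖) * ‖x k‖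
          = |‖x k‖ - ‖y k‖| * (‖y k‖⁻¹) := by field_simp
        _ ≤ 1 * ‖y k‖⁻¹ := mul_le_mul_of_nonneg_right habs (by positivity)
        _ = ‖y k‖⁻¹ := one_mul _
    calc ‖(‖y k‖⁻¹ • (y k - x k)) + ((‖y k‖⁻¹ - ‖x k‖⁻¹) • x k)‖
        ≤ ‖(‖y k‖⁻¹ • (y k - x k))‖ + ‖((‖y k‖⁻¹ - ‖x k‖⁻¹) • x k)‖ := norm_add_le _ _
      _ ≤ ‖y k‖⁻¹ + ‖y k‖⁻¹ := add_le_add hb1 hb2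
      _ = 2 * ‖y k‖⁻¹ := by ring
  have hd0 : Tendsto (fun k => ‖y k‖⁻¹ • y k - ‖x k‖⁻¹ • x k) atTop (𝓝 0) :=
    squeeze_zero_norm' hev hinv
  have := hd0.add hx.2
  simpa using this

/-- Intersection rule for directional normal cones at infinity. -/
theorem dirNCInfty_inter_subset {n : ℕ} (Ω₁ Ω₂ : Set (Eu n))
    (hloc₁ : ∀ x ∈ Ω₁, ∃ U ∈ 𝓝 x, IsClosed (Ω₁ ∩ U))
    (hloc₂ : ∀ x ∈ Ω₂, ∃ U ∈ 𝓝 x, IsClosed (Ω₂ ∩ U))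
    (hunb₁ : ¬ Bornology.IsBounded Ω₁) (hunb₂ : ¬ Bornology.IsBounded Ω₂)
    (u : Eu n) (hu : u ∈ asymptoticConeEu (Ω₁ ∩ Ω₂)) (hu1 : ‖u‖ = 1)
    (hqc : dirNCInfty Ω₁ u ∩ -dirNCInfty Ω₂ u = {0}) :
    dirNCInfty (Ω₁ ∩ Ω₂) u ⊆ dirNCInfty Ω₁ u + dirNCInfty Ω₂ u := by
  intro ξ hξ
  obtain ⟨x, w, hxΩ, hxdir, hwNC, hwlim⟩ := hξ
  have hfz : ∀ k : ℕ, ∃ Y Z η ζ : Eu n, Y ∈ Ω₁ ∧ Z ∈ Ω₂ ∧ η ∈ frechetNC Ω₁ Y ∧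
      ζ ∈ frechetNC Ω₂ Z ∧ ‖Y - x k‖ ≤ 1/((k:ℝ)+1) ∧ ‖Z - x k‖ ≤ 1/((k:ℝ)+1) ∧
      ‖w k - η - ζ‖ ≤ 1/((k:ℝ)+1) := fun k =>
    fuzzy_inter (hxΩ k).1 (hxΩ k).2 (hloc₁ _ (hxΩ k).1) (hloc₂ _ (hxΩ k).2)
      (hwNC k) (by positivity)
  choose Y Z η ζ hYΩ hZΩ hηNC hζNC hYx hZx hsum using hfz
  have hk1 : ∀ k : ℕ, 1/((k:ℝ)+1) ≤ 1 := by
    intro k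
    rw [div_le_one (by positivity)]
    have : (0:ℝ) ≤ (k:ℝ) := Nat.cast_nonneg k
    linarith
  have hYdir : TendstoDirInfty Y u :=
    tendstoDirInfty_of_close hxdir (fun k => le_trans (hYx k) (hk1 k))
  have hZdir : TendstoDirInfty Z u :=
    tendstoDirInfty_of_close hxdir (fun k => le_trans (hZx k) (hk1 k))
  set t : ℕ → ℝ := fun k => 1 + ‖η k‖ + ‖ζ k‖ with htdef
  have ht1 : ∀ k, 1 ≤ t k := fun k => by
    have := norm_nonneg (η k); have := norm_nonneg (ζ k)
    simp only [htdef]; linarith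
  have ht0 : ∀ k, 0 < t k := fun k => lt_of_lt_of_le one_pos (ht1 k)
  set lam : ℕ → ℝ := fun k => (t k)⁻¹ with hlamdef
  have hlam0 : ∀ k, 0 < lam k := fun k => by positivity
  have hlam1 : ∀ k, lam k ≤ 1 := fun k => by
    rw [hlamdef]
    simpa using inv_le_one_of_one_le₀ (ht1 k)
  set η' : ℕ → Eu n := fun k => lam k • η k with hη'def
  set ζ' : ℕ → Eu n := fun k => lam k • ζ k with hζ'def
  have hη'b : ∀ k, ‖η' k‖ ≤ 1 := fun k => by
    rw [hη'def, norm_smul, Real.norm_eq_abs, abs_of_pos (hlam0 k)]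
    have h1 : lam k * ‖η k‖ ≤ lam k * t k := by
      apply mul_le_mul_of_nonneg_left _ (hlam0 k).le
      have := norm_nonneg (ζ k); simp only [htdef]; linarith
    have h2 : lam k * t k = 1 := inv_mul_cancel₀ (ht0 k).ne'
    linarith
  have hζ'b : ∀ k, ‖ζ' k‖ ≤ 1 := fun k => by
    rw [hζ'def, norm_smul, Real.norm_eq_abs, abs_of_pos (hlam0 k)]
    have h1 : lam k * ‖ζ k‖ ≤ lam k * t k := by
      apply mul_le_mul_of_nonneg_left _ (hlam0 k).le
      have := norm_nonneg (η k); simp only [htdef]; linarith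
    have h2 : lam k * t k = 1 := inv_mul_cancel₀ (ht0 k).ne'
    linarith
  have hsum1 : ∀ k, lam k + ‖η' k‖ + ‖ζ' k‖ = 1 := fun k => by
    rw [hη'def, hζ'def, norm_smul, norm_smul, Real.norm_eq_abs, abs_of_pos (hlam0 k)]
    have : lam k * t k = 1 := inv_mul_cancel₀ (ht0 k).ne'
    simp only [htdef] at this
    ring_nf
    ring_nf at this
    linarith
  -- Bolzano-Weierstrass
  set P : ℕ → ℝ × Eu n × Eu n := fun k => (lam k, η' k, ζ' k) with hPdef
  have hPmem : ∀ k, P k ∈ (Icc (0:ℝ) 1) ×ˢ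
      ((Metric.closedBall (0: Eu n) 1) ×ˢ (Metric.closedBall (0 : Eu n) 1)) := by
    intro k
    refine Set.mk_mem_prod ⟨(hlam0 k).le, hlam1 k⟩ (Set.mk_mem_prod ?_ ?_) <;>
      rw [Metric.mem_closedBall, dist_zero_right]
    · exact hη'b k
    · exact hζ'b k
  have hcpt : IsCompact ((Icc (0:ℝ) 1) ×ˢ
      ((Metric.closedBall (0: Eu n) 1) ×ˢ (Metric.closedBall (0 : Eu n) 1))) :=
    isCompact_Icc.prod ((isCompact_closedBall _ _).prod (isCompact_closedBall _ _))
  obtain ⟨L, hLmem, φ, hφ, hLconv⟩ := hcpt.tendsto_subseq hPmem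
  obtain ⟨l, ηl, ζl⟩ := L
  have hlaml : Tendsto (fun j => lam (φ j)) atTop (𝓝 l) :=
    (continuous_fst.tendsto _).comp hLconv
  have hηl : Tendsto (fun j => η' (φ j)) atTop (𝓝 ηl) :=
    ((continuous_fst.tendsto _).comp ((continuous_snd.tendsto _).comp hLconv))
  have hζl : Tendsto (fun j => ζ' (φ j)) atTop (𝓝 ζl) :=
    ((continuous_snd.tendsto _).comp ((continuous_snd.tendsto _).comp hLconv))
  -- l • ξ = ηl + ζl
  have hzero : Tendsto (fun j => lam (φ j) • w (φ j) - η' (φ j) - ζ' (φ j)) atTop (𝓝 0) := by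
    have hb : ∀ j : ℕ, ‖lam (φ j) • w (φ j) - η' (φ j) - ζ' (φ j)‖ ≤ 1/((j:ℝ)+1) := by
      intro j
      have hval : lam (φ j) • w (φ j) - η' (φ j) - ζ' (φ j)
          = lam (φ j) • (w (φ j) - η (φ j) - ζ (φ j)) := by
        rw [hη'def, hζ'def, smul_sub, smul_sub]
      rw [hval, norm_smul, Real.norm_eq_abs, abs_of_pos (hlam0 _)]
      calc lam (φ j) * ‖w (φ j) - η (φ j) - ζ (φ j)‖
          ≤ 1 * (1/((φ j : ℝ)+1)) := by
            apply mul_le_mul (hlam1 _) (hsum _) (norm_nonneg _) zero_le_one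
        _ = 1/((φ j : ℝ)+1) := one_mul _
        _ ≤ 1/((j:ℝ)+1) := by
            apply div_le_div_of_nonneg_left one_pos.le (by positivity)
            have h5 : j ≤ φ j := hφ.le_apply
            have h6 : (j:ℝ) ≤ (φ j : ℝ) := by exact_mod_cast h5
            linarith
    exact squeeze_zero_norm hb tendsto_one_div_add_atTop_nhds_zero_nat
  have hwφ : Tendsto (fun j => w (φ j)) atTop (𝓝 ξ) := hwlim.comp hφ.tendsto_atTop
  have hlimeq : l • ξ - ηl - ζl = 0 := by
    have h1 : Tendsto (fun j => lam (φ j) • w (φ j) - η' (φ j) - ζ' (φ j)) atTop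
        (𝓝 (l • ξ - ηl - ζl)) := ((hlaml.smul hwφ).sub hηl).sub hζl
    exact tendsto_nhds_unique h1 hzero
  have hnormeq : l + ‖ηl‖ + ‖ζl‖ = 1 := by
    have h1 : Tendsto (fun j => lam (φ j) + ‖η' (φ j)‖ + ‖ζ' (φ j)‖) atTop
        (𝓝 (l + ‖ηl‖ + ‖ζl‖)) := (hlaml.add hηl.norm).add hζl.norm
    have h2 : Tendsto (fun j => lam (φ j) + ‖η' (φ j)‖ + ‖ζ' (φ j)‖) atTop (𝓝 1) := by
      simp only [hsum1]; exact tendsto_const_nhds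
    exact tendsto_nhds_unique h1 h2
  -- memberships
  have hηlmem : ηl ∈ dirNCInfty Ω₁ u := by
    refine ⟨fun j => Y (φ j), fun j => η' (φ j), fun j => hYΩ (φ j),
      ⟨hYdir.1.comp hφ.tendsto_atTop, hYdir.2.comp hφ.tendsto_atTop⟩,
      fun j => frechetNC_smul (hlam0 (φ j)) (hηNC (φ j)), hηl⟩
  have hζlmem : ζl ∈ dirNCInfty Ω₂ u := by
    refine ⟨fun j => Z (φ j), fun j => ζ' (φ j), fun j => hZΩ (φ j),
      ⟨hZdir.1.comp hφ.tendsto_atTop, hZdir.2.comp hφ.tendsto_atTop⟩,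
      fun j => frechetNC_smul (hlam0 (φ j)) (hζNC (φ j)), hζl⟩
  have hl0 : 0 < l := by
    have hlnn : 0 ≤ l := le_of_tendsto_of_tendsto' tendsto_const_nhds hlaml
      (fun j => (hlam0 (φ j)).le)
    rcases hlnn.eq_or_lt with h0 | h0
    · exfalso
      have h2 : ηl + ζl = 0 := by
        have h3 := hlimeq
        rw [← h0, zero_smul] at h3
        have h4 : -(ηl + ζl) = 0 := by rw [← h3]; abel
        have h5 := neg_eq_zero.mp h4
        exact h5
      have hηn : ηl ∈ dirNCInfty Ω₁ u ∩ -dirNCInfty Ω₂ u := by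
        refine ⟨hηlmem, ?_⟩
        rw [Set.mem_neg, neg_eq_of_add_eq_zero_right h2]
        exact hζlmem
      rw [hqc] at hηn
      have hη0 : ηl = 0 := hηn
      have hζ0 : ζl = 0 := by rwa [hη0, zero_add] at h2
      rw [← h0, hη0, hζ0] at hnormeq
      simp at hnormeq
    · exact h0
  have hξeq : ξ = l⁻¹ • ηl + l⁻¹ • ζl := by
    have h2 : ηl + ζl = l • ξ := by
      have := hlimeq
      have : l • ξ - (ηl + ζl) = 0 := by rw [← this]; abel
      have := sub_eq_zero.mp this
      exact this.symm
    rw [← smul_add, h2, smul_smul, inv_mul_cancel₀ hl0.ne', one_smul]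
  rw [hξeq]
  exact Set.add_mem_add (dirNCInfty_smul (by positivity) hηlmem)
    (dirNCInfty_smul (by positivity) hζlmem)
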